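/- Let G₁,…,G_l with G_i ∈ ℝ^{m_i × n_i} be given matrices and λ ≥ 0. For each i, let (p_i, q_i) be an index pair maximizing |(G_i)_{pq}| over all entries of G_i, and define S_i ∈ ℝ^{m_i × n_i} by (S_i)_{p_i q_i} = −λ·sign((G_i)_{p_i q_i}) and all other entries zero. Then max_i ‖S_i‖₁ ≤ λ and for every tuple (W₁,…,W_l) with max_i ‖W_i‖₁ ≤ λ we have Σ_{i=1}^{l} ⟨G_i, S_i⟩ ≤ Σ_{i=1}^{l} ⟨G_i, W_i⟩, where ⟨A,B⟩ = Σ_{jk} A_{jk}B_{jk}; moreover Σ_i ⟨G_i, S_i⟩ = −λ·Σ_i max_{pq} |(G_i)_{pq}|. -/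

import Mathlib

/-!
The constraint `max_i ‖W_i‖₁ ≤ λ` is a product of per-layer ℓ₁ balls, so the linear problem
splits into one problem per layer. In each layer Hölder's inequality gives
`⟨G, W⟩ ≥ -‖G‖_∞ ‖W‖₁ ≥ -λ |G_{pq}|`, and the signed single-entry matrix `S` attains this bound.
-/

open Finset

section DoubleSums

variable {α β : Type*} [Fintype α] [Fintype β]

lemma sum_sum_ite_and_eq {M : Type*} [AddCommMonoid M] [DecidableEq α] [DecidableEq β]
    (f : α → β → M) (p : α) (q : β) :
    ∑ a, ∑ b, (if a = p ∧ b = q then f a b else 0) = f p q := by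
  simp [ite_and]

lemma sum_sum_mul_ite_and_eq {R : Type*} [NonUnitalNonAssocSemiring R] [DecidableEq α]
    [DecidableEq β] (G : α → β → R) (p : α) (q : β) (c : R) :
    ∑ a, ∑ b, G a b * (if a = p ∧ b = q then c else 0) = G p q * c := by
  simp only [mul_ite, mul_zero]
  exact sum_sum_ite_and_eq _ p q

section OrderedRing

variable {R : Type*} [CommRing R] [LinearOrder R] [IsStrictOrderedRing R]

lemma mul_ite_neg_one_one_eq_abs (x : R) : x * (if x < 0 then -1 else 1) = |x| := by
  split_ifs with hx
  · rw [abs_of_neg hx, mul_neg_one]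
  · rw [abs_of_nonneg (not_lt.mp hx), mul_one]

lemma abs_ite_neg_one_one (P : Prop) [Decidable P] : |(if P then -1 else 1 : R)| = 1 := by
  split_ifs <;> simp

lemma sum_sum_abs_ite_and_eq [DecidableEq α] [DecidableEq β] (p : α) (q : β) (c : R) :
    ∑ a, ∑ b, |if a = p ∧ b = q then c else 0| = |c| := by
  simp only [apply_ite abs, abs_zero]
  exact sum_sum_ite_and_eq _ p q

lemma neg_mul_sum_sum_abs_le_sum_sum_mul {G W : α → β → R} {c : R}
    (hG : ∀ a b, |G a b| ≤ c) :
    -(c * ∑ a, ∑ b, |W a b|) ≤ ∑ a, ∑ b, G a b * W a b := by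
  simp only [mul_sum, ← sum_neg_distrib]
  refine sum_le_sum fun a _ => sum_le_sum fun b _ => ?_
  calc -(c * |W a b|) ≤ -|G a b * W a b| := by
        rw [abs_mul, neg_le_neg_iff]
        exact mul_le_mul_of_nonneg_right (hG a b) (abs_nonneg _)
    _ ≤ G a b * W a b := neg_abs_le _

lemma neg_mul_abs_le_sum_sum_mul_of_abs_le {G W : α → β → R} {p : α} {q : β} {r : R}
    (hpq : ∀ a b, |G a b| ≤ |G p q|) (hW : ∑ a, ∑ b, |W a b| ≤ r) :
    -(r * |G p q|) ≤ ∑ a, ∑ b, G a b * W a b := by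
  calc -(r * |G p q|) ≤ -(|G p q| * ∑ a, ∑ b, |W a b|) := by
        rw [mul_comm, neg_le_neg_iff]
        exact mul_le_mul_of_nonneg_left hW (abs_nonneg _)
    _ ≤ ∑ a, ∑ b, G a b * W a b := neg_mul_sum_sum_abs_le_sum_sum_mul hpq

end OrderedRing

end DoubleSums

/-- Closed form of the conditional-gradient step for the ℓ₁/ℓ∞ group-norm
ball `{(W₁,…,W_l) : max_i ‖W_i‖₁ ≤ λ}`: in each layer `i`, put
`-λ·sign((G_i)_{p_i q_i})` at an entry `(p_i, q_i)` of maximal magnitude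
and `0` elsewhere. -/
theorem cg_step_group_l1_linf_ball {l : ℕ} (m n : Fin l → ℕ)
    (lam : ℝ) (hlam : 0 ≤ lam)
    (G : ∀ i, Matrix (Fin (m i)) (Fin (n i)) ℝ)
    (p : ∀ i, Fin (m i)) (q : ∀ i, Fin (n i))
    (hpq : ∀ i a b, |G i a b| ≤ |G i (p i) (q i)|)
    (S : ∀ i, Matrix (Fin (m i)) (Fin (n i)) ℝ)
    (hS : ∀ i, S i = fun a b =>
      if a = p i ∧ b = q i then
        -lam * (if G i (p i) (q i) < 0 then -1 else 1)
      else 0) :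
    (∀ i, (∑ a, ∑ b, |S i a b|) ≤ lam) ∧
    (∀ W : ∀ i, Matrix (Fin (m i)) (Fin (n i)) ℝ,
      (∀ i, (∑ a, ∑ b, |W i a b|) ≤ lam) →
      (∑ i, ∑ a, ∑ b, G i a b * S i a b) ≤
        ∑ i, ∑ a, ∑ b, G i a b * W i a b) ∧
    (∑ i, ∑ a, ∑ b, G i a b * S i a b) =
      -(lam * ∑ i, |G i (p i) (q i)|) := by
  have hS_norm : ∀ i, ∑ a, ∑ b, |S i a b| = lam := fun i => by
    simp only [hS]
    rw [sum_sum_abs_ite_and_eq, abs_mul, abs_neg, abs_ite_neg_one_one, abs_of_nonneg hlam,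
      mul_one]
  have hGS : ∀ i, ∑ a, ∑ b, G i a b * S i a b = -(lam * |G i (p i) (q i)|) := fun i => by
    simp only [hS]
    rw [sum_sum_mul_ite_and_eq (G i), mul_left_comm, mul_ite_neg_one_one_eq_abs, neg_mul]
  refine ⟨fun i => (hS_norm i).le, fun W hW => ?_, ?_⟩
  · simp only [hGS]
    exact sum_le_sum fun i _ => neg_mul_abs_le_sum_sum_mul_of_abs_le (hpq i) (hW i)
  · simp only [hGS, mul_sum, sum_neg_distrib]
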